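/- arXiv:2405.16891 — 2 statements merged into one kernel-verified Lean document; each statement's English description precedes it below -/
import Mathlib

section
/- Let G be a connected simple graph on Fin n (n ≥ 2) and let f : Fin n → EuclideanSpace ℂ (Fin (n−1)) be a G(n,n−1)-frame. If f is a tight frame, then G is a regular graph: there exists r : ℕ such that every vertex of G has degree r. -/
open scoped ComplexInnerProductSpace

/-! For a tight frame with Gramian `M`, testing tightness against `f j` gives `(M²)ⱼⱼ = α Mⱼⱼ`.
For the Laplacian the diagonal entries of `L²` are `dⱼ² + dⱼ`, so every degree `dⱼ` satisfies
`dⱼ² + dⱼ = α dⱼ`; connectivity makes `dⱼ > 0`, whence `dⱼ = α - 1` for all `j`. -/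

namespace SimpleGraph

variable {V R : Type*} [Fintype V] [DecidableEq V] (G : SimpleGraph V) [DecidableRel G.Adj]

theorem lapMatrix_apply_self [AddGroupWithOne R] (v : V) :
    G.lapMatrix R v v = G.degree v := by
  simp [lapMatrix, degMatrix]

theorem lapMatrix_apply_of_adj [AddGroupWithOne R] {u v : V} (h : G.Adj u v) :
    G.lapMatrix R u v = -1 := by
  simp [lapMatrix, degMatrix, h.ne, h]

theorem sum_lapMatrix_apply_sq [CommRing R] (v : V) :
    ∑ u, G.lapMatrix R u v ^ 2 = (G.degree v : R) ^ 2 + G.degree v := by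
  have hsymm : ∀ u, G.lapMatrix R v u = G.lapMatrix R u v := fun u =>
    ((G.isSymm_lapMatrix R).apply v u).symm
  have hmul := G.lapMatrix_mulVec_apply v (fun u => G.lapMatrix R u v)
  simp only [Matrix.mulVec, dotProduct, hsymm, ← sq] at hmul
  rw [hmul, lapMatrix_apply_self, Finset.sum_congr rfl fun u hu =>
    G.lapMatrix_apply_of_adj ((mem_neighborFinset G v u).mp hu).symm]
  simp [card_neighborFinset_eq_degree, sq]

end SimpleGraph

theorem sum_sq_gram_eq_of_tight {𝕜 E ι : Type*} [RCLike 𝕜] [NormedAddCommGroup E]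
    [InnerProductSpace 𝕜 E] [Fintype ι] {f : ι → E} {M : Matrix ι ι ℝ}
    (hM : ∀ i j, inner 𝕜 (f i) (f j) = (M i j : 𝕜)) {α : ℝ}
    (ht : ∀ v, ∑ i, ‖inner 𝕜 (f i) v‖ ^ 2 = α * ‖v‖ ^ 2) (j : ι) :
    ∑ i, M i j ^ 2 = α * M j j := by
  have h := ht (f j)
  simp only [hM, RCLike.norm_ofReal, sq_abs, @norm_sq_eq_re_inner 𝕜, RCLike.ofReal_re] at h
  exact h

theorem stmt_10_general (n : ℕ) (hn : 2 ≤ n)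
    (G : SimpleGraph (Fin n)) [DecidableRel G.Adj] (hG : G.Connected)
    (f : Fin n → EuclideanSpace ℂ (Fin (n - 1)))
    (hf_gram : ∀ i j : Fin n, ⟪f i, f j⟫ = ((G.lapMatrix ℝ) i j : ℂ))
    (htight : ∃ α : ℝ, 0 < α ∧
      ∀ v : EuclideanSpace ℂ (Fin (n - 1)),
        ∑ i : Fin n, ‖⟪f i, v⟫‖ ^ 2 = α * ‖v‖ ^ 2) :
    ∃ r : ℕ, ∀ v : Fin n, G.degree v = r := by
  obtain ⟨α, -, ht⟩ := htight
  have : Nontrivial (Fin n) := Fin.nontrivial_iff_two_le.mpr hn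
  have hdeg : ∀ v, (G.degree v : ℝ) = α - 1 := fun v => by
    have hpos : (0 : ℝ) < G.degree v := by
      exact_mod_cast hG.preconnected.degree_pos_of_nontrivial v
    have h := sum_sq_gram_eq_of_tight (M := G.lapMatrix ℝ) hf_gram ht v
    rw [G.sum_lapMatrix_apply_sq, G.lapMatrix_apply_self] at h
    have := mul_left_cancel₀ hpos.ne'
      (show (G.degree v : ℝ) * (G.degree v + 1) = G.degree v * α by linear_combination h)
    linarith
  exact ⟨G.degree ⟨0, by omega⟩, fun v => by exact_mod_cast (hdeg v).trans (hdeg _).symm⟩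

theorem stmt_10 (n : ℕ) (hn : 2 ≤ n)
    (G : SimpleGraph (Fin n)) [DecidableRel G.Adj] (hG : G.Connected)
    (f : Fin n → EuclideanSpace ℂ (Fin (n - 1)))
    (hf_span : Submodule.span ℂ (Set.range f) = ⊤)
    (hf_gram : ∀ i j : Fin n, ⟪f i, f j⟫ = ((G.lapMatrix ℝ) i j : ℂ))
    (htight : ∃ α : ℝ, 0 < α ∧
      ∀ v : EuclideanSpace ℂ (Fin (n - 1)),
        ∑ i : Fin n, ‖⟪f i, v⟫‖ ^ 2 = α * ‖v‖ ^ 2) :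
    ∃ r : ℕ, ∀ v : Fin n, G.degree v = r :=
  stmt_10_general n hn G hG f hf_gram htight
end

section
/- Let f : Fin n → EuclideanSpace ℂ (Fin k) be an α-tight frame for ℂ^k with α > 0 (that is, ∑ i, ‖⟪f i, v⟫‖² = α · ‖v‖² for every v ∈ ℂ^k). Then its Gramian matrix 𝒢 (the n×n complex matrix with (i,j)-entry ⟪f i, f j⟫) satisfies 𝒢 · 𝒢 = α • 𝒢. -/
/-!
Tightness says that the frame operator `S v = ∑ i, ⟪f i, v⟫ • f i` satisfies
`⟪S v, v⟫ = α ‖v‖²` for all `v`; since `S` is self-adjoint, polarization gives `S = α • id`.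
The `(i, j)` entry of `𝒢 * 𝒢` is `⟪f i, S (f j)⟫ = α ⟪f i, f j⟫`.
-/

open scoped InnerProductSpace

open InnerProductSpace

variable (𝕜 : Type*) {E ι : Type*} [RCLike 𝕜] [NormedAddCommGroup E] [InnerProductSpace 𝕜 E]
  [Fintype ι]

noncomputable def frameOperator (f : ι → E) : E →L[𝕜] E :=
  ∑ i, rankOne 𝕜 (f i) (f i)

variable {𝕜}

lemma frameOperator_apply (f : ι → E) (v : E) :
    frameOperator 𝕜 f v = ∑ i, ⟪f i, v⟫_𝕜 • f i := by
  simp [frameOperator]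

lemma isSymmetric_frameOperator (f : ι → E) :
    (frameOperator 𝕜 f : E →ₗ[𝕜] E).IsSymmetric := by
  simpa [frameOperator] using
    LinearMap.isSymmetric_sum Finset.univ fun i _ => isSymmetric_rankOne_self (𝕜 := 𝕜) (f i)

lemma inner_frameOperator_self (f : ι → E) (v : E) :
    ⟪frameOperator 𝕜 f v, v⟫_𝕜 = ((∑ i, ‖⟪f i, v⟫_𝕜‖ ^ 2 : ℝ) : 𝕜) := by
  rw [frameOperator_apply, sum_inner]
  push_cast
  refine Finset.sum_congr rfl fun i _ => ?_
  rw [inner_smul_left, RCLike.conj_mul]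

lemma frameOperator_eq_smul_id_of_tight {f : ι → E} {α : ℝ}
    (htight : ∀ v, ∑ i, ‖⟪f i, v⟫_𝕜‖ ^ 2 = α * ‖v‖ ^ 2) :
    frameOperator 𝕜 f = (α : 𝕜) • ContinuousLinearMap.id 𝕜 E := by
  have hsymm : ((frameOperator 𝕜 f - (α : 𝕜) • ContinuousLinearMap.id 𝕜 E : E →L[𝕜] E) :
      E →ₗ[𝕜] E).IsSymmetric := by
    simpa using (isSymmetric_frameOperator f).sub
      (LinearMap.IsSymmetric.id.smul (RCLike.conj_ofReal α))
  rw [← sub_eq_zero, ← ContinuousLinearMap.coe_inj, ContinuousLinearMap.toLinearMap_zero,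
    ← hsymm.inner_map_self_eq_zero]
  intro v
  simp [inner_sub_left, inner_frameOperator_self, htight, inner_smul_left,
    inner_self_eq_norm_sq_to_K]

lemma gram_mul_gram_apply (f : ι → E) (i j : ι) :
    (Matrix.gram 𝕜 f * Matrix.gram 𝕜 f) i j = ⟪f i, frameOperator 𝕜 f (f j)⟫_𝕜 := by
  simp [Matrix.mul_apply, frameOperator_apply, inner_sum, inner_smul_right, mul_comm]

theorem gram_mul_gram_of_tight {f : ι → E} {α : ℝ}
    (htight : ∀ v, ∑ i, ‖⟪f i, v⟫_𝕜‖ ^ 2 = α * ‖v‖ ^ 2) :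
    Matrix.gram 𝕜 f * Matrix.gram 𝕜 f = (α : 𝕜) • Matrix.gram 𝕜 f := by
  ext i j
  simp [gram_mul_gram_apply, frameOperator_eq_smul_id_of_tight htight, inner_smul_right]

open scoped ComplexInnerProductSpace

theorem stmt_16_general (n k : ℕ) (f : Fin n → EuclideanSpace ℂ (Fin k))
    (α : ℝ)
    (htight : ∀ v : EuclideanSpace ℂ (Fin k),
      ∑ i : Fin n, ‖⟪f i, v⟫‖ ^ 2 = α * ‖v‖ ^ 2)
    (𝒢 : Matrix (Fin n) (Fin n) ℂ)
    (h𝒢 : ∀ i j : Fin n, 𝒢 i j = ⟪f i, f j⟫) :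
    𝒢 * 𝒢 = (α : ℂ) • 𝒢 := by
  obtain rfl : 𝒢 = Matrix.gram ℂ f := Matrix.ext h𝒢
  exact gram_mul_gram_of_tight htight

theorem stmt_16 (n k : ℕ) (f : Fin n → EuclideanSpace ℂ (Fin k))
    (α : ℝ) (hα : 0 < α)
    (htight : ∀ v : EuclideanSpace ℂ (Fin k),
      ∑ i : Fin n, ‖⟪f i, v⟫‖ ^ 2 = α * ‖v‖ ^ 2)
    (𝒢 : Matrix (Fin n) (Fin n) ℂ)
    (h𝒢 : ∀ i j : Fin n, 𝒢 i j = ⟪f i, f j⟫) :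
    𝒢 * 𝒢 = (α : ℂ) • 𝒢 :=
  stmt_16_general n k f α htight 𝒢 h𝒢
end
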